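/- arXiv:math/0505524 — 12 statements merged into one kernel-verified Lean document; each statement's English description precedes it below -/
import Mathlib

section
/- Let H be an inner product space over ℝ or ℂ, let a ∈ H be a unit vector, and suppose x₁,…,xₙ ∈ H \ {0} satisfy 0 ≤ r ≤ Re⟨xᵢ, a⟩ / ‖xᵢ‖ for all i. Then r · ∑ᵢ ‖xᵢ‖ ≤ ‖∑ᵢ xᵢ‖. -/
theorem stmt_0 {𝕂 H : Type*} [RCLike 𝕂] [NormedAddCommGroup H] [InnerProductSpace 𝕂 H]
    (a : H) (ha : ‖a‖ = 1) {n : ℕ} (x : Fin n → H) (hx : ∀ i, x i ≠ 0)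
    (r : ℝ) (hr : 0 ≤ r)
    (h : ∀ i, r ≤ RCLike.re (@inner 𝕂 _ _ (x i) a) / ‖x i‖) :
    r * ∑ i, ‖x i‖ ≤ ‖∑ i, x i‖ := by
  have h1 : ∀ i, r * ‖x i‖ ≤ RCLike.re (@inner 𝕂 _ _ (x i) a) := by
    intro i
    have hn : (0:ℝ) < ‖x i‖ := norm_pos_iff.mpr (hx i)
    have := (le_div_iff₀ hn).mp (h i)
    linarith
  calc r * ∑ i, ‖x i‖ = ∑ i, r * ‖x i‖ := Finset.mul_sum _ _ _
    _ ≤ ∑ i, RCLike.re (@inner 𝕂 _ _ (x i) a) := Finset.sum_le_sum fun i _ => h1 i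
    _ = RCLike.re (@inner 𝕂 _ _ (∑ i, x i) a) := by
        rw [sum_inner, map_sum]
    _ ≤ ‖@inner 𝕂 _ _ (∑ i, x i) a‖ := RCLike.re_le_norm _
    _ ≤ ‖∑ i, x i‖ * ‖a‖ := norm_inner_le_norm _ _
    _ = ‖∑ i, x i‖ := by rw [ha, mul_one]
end

section
/- Let H be an inner product space, a₁,…,aₘ orthonormal vectors in H, and x₁,…,xₙ ∈ H \ {0} satisfying 0 ≤ rₖ ≤ Re⟨xᵢ, aₖ⟩ / ‖xᵢ‖ for all i ∈ {1,…,n} and k ∈ {1,…,m}. Then (∑ₖ rₖ²)^{1/2} · ∑ᵢ ‖xᵢ‖ ≤ ‖∑ᵢ xᵢ‖. -/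
/-!
Put `v = ∑ₖ rₖ aₖ`, so that `‖v‖² = ∑ₖ rₖ² =: R` by orthonormality. The hypothesis, multiplied
by `rₖ ≥ 0` and summed over `k`, gives `R ‖xᵢ‖ ≤ Re⟨xᵢ, v⟩`; summing over `i` and applying
Cauchy–Schwarz to `⟨∑ᵢ xᵢ, v⟩` yields `R ∑ᵢ ‖xᵢ‖ ≤ √R ‖∑ᵢ xᵢ‖`, and it remains to cancel `√R`.
-/

open Finset RCLike

section

variable {𝕂 H : Type*} [RCLike 𝕂] [NormedAddCommGroup H] [InnerProductSpace 𝕂 H]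

theorem mul_sum_norm_le_of_le_re_inner {ι : Type*} (s : Finset ι) (x : ι → H) (v : H) {c : ℝ}
    (hc : ∀ i ∈ s, c * ‖x i‖ ≤ re (inner 𝕂 (x i) v)) :
    c * ∑ i ∈ s, ‖x i‖ ≤ ‖v‖ * ‖∑ i ∈ s, x i‖ :=
  calc c * ∑ i ∈ s, ‖x i‖ = ∑ i ∈ s, c * ‖x i‖ := mul_sum _ _ _
    _ ≤ ∑ i ∈ s, re (inner 𝕂 (x i) v) := sum_le_sum hc
    _ = re (inner 𝕂 (∑ i ∈ s, x i) v) := by rw [sum_inner, map_sum]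
    _ ≤ ‖∑ i ∈ s, x i‖ * ‖v‖ := re_inner_le_norm _ _
    _ = ‖v‖ * ‖∑ i ∈ s, x i‖ := mul_comm _ _

theorem Orthonormal.norm_sum_ofReal_smul {ι : Type*} {a : ι → H} (ha : Orthonormal 𝕂 a)
    (s : Finset ι) (r : ι → ℝ) :
    ‖∑ k ∈ s, (r k : 𝕂) • a k‖ = √(∑ k ∈ s, r k ^ 2) := by
  have hsq : ‖∑ k ∈ s, (r k : 𝕂) • a k‖ ^ 2 = ∑ k ∈ s, r k ^ 2 := by
    rw [← inner_self_eq_norm_sq (𝕜 := 𝕂), ha.inner_sum, map_sum]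
    refine sum_congr rfl fun k _ => ?_
    rw [conj_ofReal, ← ofReal_mul, ofReal_re, sq]
  rw [← hsq, Real.sqrt_sq (norm_nonneg _)]

theorem re_inner_sum_ofReal_smul {ι : Type*} (s : Finset ι) (x : H) (a : ι → H) (r : ι → ℝ) :
    re (inner 𝕂 x (∑ k ∈ s, (r k : 𝕂) • a k)) = ∑ k ∈ s, r k * re (inner 𝕂 x (a k)) := by
  simp only [inner_sum, inner_smul_right, map_sum, re_ofReal_mul]

theorem mul_norm_le_re_inner_of_le_div {x a : H} {c : ℝ}
    (h : c ≤ re (inner 𝕂 x a) / ‖x‖) : c * ‖x‖ ≤ re (inner 𝕂 x a) := by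
  rcases eq_or_ne x 0 with rfl | hx
  · simp
  · exact (le_div_iff₀ (norm_pos_iff.mpr hx)).mp h

end

theorem stmt_1_general {𝕂 H : Type*} [RCLike 𝕂] [NormedAddCommGroup H] [InnerProductSpace 𝕂 H]
    {m n : ℕ} (a : Fin m → H) (ha : Orthonormal 𝕂 a)
    (x : Fin n → H) (r : Fin m → ℝ)
    (hr : ∀ k, 0 ≤ r k)
    (h : ∀ i k, r k ≤ RCLike.re (@inner 𝕂 _ _ (x i) (a k)) / ‖x i‖) :
    Real.sqrt (∑ k, (r k) ^ 2) * ∑ i, ‖x i‖ ≤ ‖∑ i, x i‖ := by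
  set R := ∑ k, r k ^ 2
  have hxv : ∀ i ∈ univ, R * ‖x i‖ ≤ re (inner 𝕂 (x i) (∑ k, (r k : 𝕂) • a k)) := by
    intro i _
    rw [re_inner_sum_ofReal_smul, sum_mul]
    refine sum_le_sum fun k _ => ?_
    calc r k ^ 2 * ‖x i‖ = r k * (r k * ‖x i‖) := by ring
      _ ≤ r k * re (inner 𝕂 (x i) (a k)) :=
        mul_le_mul_of_nonneg_left (mul_norm_le_re_inner_of_le_div (h i k)) (hr k)
  have hR0 : 0 ≤ R := sum_nonneg fun k _ => sq_nonneg (r k)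
  have key : √R * (√R * ∑ i, ‖x i‖) ≤ √R * ‖∑ i, x i‖ := by
    rw [← mul_assoc, Real.mul_self_sqrt hR0, ← ha.norm_sum_ofReal_smul]
    exact mul_sum_norm_le_of_le_re_inner univ x _ hxv
  rcases (Real.sqrt_nonneg R).eq_or_lt with hR | hR
  · rw [← hR, zero_mul]
    exact norm_nonneg _
  · exact le_of_mul_le_mul_left key hR

theorem stmt_1 {𝕂 H : Type*} [RCLike 𝕂] [NormedAddCommGroup H] [InnerProductSpace 𝕂 H]
    {m n : ℕ} (a : Fin m → H) (ha : Orthonormal 𝕂 a)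
    (x : Fin n → H) (hx : ∀ i, x i ≠ 0) (r : Fin m → ℝ)
    (hr : ∀ k, 0 ≤ r k)
    (h : ∀ i k, r k ≤ RCLike.re (@inner 𝕂 _ _ (x i) (a k)) / ‖x i‖) :
    Real.sqrt (∑ k, (r k) ^ 2) * ∑ i, ‖x i‖ ≤ ‖∑ i, x i‖ :=
  stmt_1_general a ha x r hr h
end

section
/- Let X be a normed linear space over 𝕂, Fₖ : X → 𝕂 (k = 1,…,m) continuous linear functionals, and x₁,…,xₙ ∈ X \ {0}. If rₖ ≥ 0 with ∑ₖ rₖ > 0 and Re Fₖ(xᵢ) ≥ rₖ‖xᵢ‖ for all i, k, then ∑ᵢ ‖xᵢ‖ ≤ (‖∑ₖ Fₖ‖ / ∑ₖ rₖ) · ‖∑ᵢ xᵢ‖. -/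
theorem stmt_3 {𝕂 X : Type*} [RCLike 𝕂] [NormedAddCommGroup X] [NormedSpace 𝕂 X]
    {m n : ℕ} (F : Fin m → (X →L[𝕂] 𝕂)) (x : Fin n → X) (hx : ∀ i, x i ≠ 0)
    (r : Fin m → ℝ) (hr : ∀ k, 0 ≤ r k) (hrs : 0 < ∑ k, r k)
    (h : ∀ i k, r k * ‖x i‖ ≤ RCLike.re (F k (x i))) :
    ∑ i, ‖x i‖ ≤ (‖∑ k, F k‖ / ∑ k, r k) * ‖∑ i, x i‖ := by
  rw [div_mul_eq_mul_div, le_div_iff₀ hrs, mul_comm]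
  have key : (∑ k, r k) * ∑ i, ‖x i‖ ≤ RCLike.re ((∑ k, F k) (∑ i, x i)) := by
    rw [map_sum, map_sum, Finset.mul_sum]
    refine Finset.sum_le_sum fun i _ => ?_
    rw [ContinuousLinearMap.sum_apply, map_sum, Finset.sum_mul]
    exact Finset.sum_le_sum fun k _ => h i k
  calc (∑ k, r k) * ∑ i, ‖x i‖ ≤ RCLike.re ((∑ k, F k) (∑ i, x i)) := key
    _ ≤ ‖(∑ k, F k) (∑ i, x i)‖ := RCLike.re_le_norm _
    _ ≤ ‖∑ k, F k‖ * ‖∑ i, x i‖ := ContinuousLinearMap.le_opNorm _ _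
end

section
/- Let H be an inner product space over 𝕂, eₖ, xᵢ ∈ H \ {0} for k = 1,…,m, i = 1,…,n. If rₖ ≥ 0 with ∑ₖ rₖ > 0 satisfy Re⟨xᵢ, eₖ⟩ ≥ rₖ‖xᵢ‖ for all i and k, then ∑ᵢ ‖xᵢ‖ ≤ (‖∑ₖ eₖ‖ / ∑ₖ rₖ) · ‖∑ᵢ xᵢ‖. -/
theorem stmt_4 {𝕂 H : Type*} [RCLike 𝕂] [NormedAddCommGroup H] [InnerProductSpace 𝕂 H]
    {m n : ℕ} (e : Fin m → H) (he : ∀ k, e k ≠ 0)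
    (x : Fin n → H) (hx : ∀ i, x i ≠ 0)
    (r : Fin m → ℝ) (hr : ∀ k, 0 ≤ r k) (hrs : 0 < ∑ k, r k)
    (h : ∀ i k, r k * ‖x i‖ ≤ RCLike.re (@inner 𝕂 _ _ (x i) (e k))) :
    ∑ i, ‖x i‖ ≤ (‖∑ k, e k‖ / ∑ k, r k) * ‖∑ i, x i‖ := by
  rw [div_mul_eq_mul_div, le_div_iff₀ hrs, mul_comm]
  calc (∑ k, r k) * ∑ i, ‖x i‖ = ∑ i, ∑ k, r k * ‖x i‖ := by
        simp only [Finset.sum_mul, Finset.mul_sum]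
    _ ≤ ∑ i, ∑ k, RCLike.re (@inner 𝕂 _ _ (x i) (e k)) := by
        apply Finset.sum_le_sum; intro i _
        exact Finset.sum_le_sum fun k _ => h i k
    _ = RCLike.re (@inner 𝕂 _ _ (∑ i, x i) (∑ k, e k)) := by
        rw [sum_inner, map_sum]
        congr 1; ext i
        rw [inner_sum, map_sum]
    _ ≤ ‖∑ i, x i‖ * ‖∑ k, e k‖ := by
        calc RCLike.re (@inner 𝕂 _ _ (∑ i, x i) (∑ k, e k))
            ≤ ‖@inner 𝕂 _ _ (∑ i, x i) (∑ k, e k)‖ := RCLike.re_le_norm _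
          _ ≤ _ := norm_inner_le_norm _ _
    _ = ‖∑ k, e k‖ * ‖∑ i, x i‖ := mul_comm _ _
end

section
/- Let H be an inner product space over 𝕂, and x, a ∈ H, r > 0 with ‖x − a‖ ≤ r < ‖a‖. Then ‖x‖ · (‖a‖² − r²)^{1/2} ≤ Re⟨x, a⟩. -/
theorem stmt_5 {𝕂 H : Type*} [RCLike 𝕂] [NormedAddCommGroup H] [InnerProductSpace 𝕂 H]
    (x a : H) (r : ℝ) (hr : 0 < r) (h1 : ‖x - a‖ ≤ r) (h2 : r < ‖a‖) :
    ‖x‖ * Real.sqrt (‖a‖ ^ 2 - r ^ 2) ≤ RCLike.re (@inner 𝕂 _ _ x a) := by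
  have hsq : ‖x - a‖ ^ 2 ≤ r ^ 2 := by
    apply pow_le_pow_left₀ (norm_nonneg _) h1
  have hexp : ‖x - a‖ ^ 2 = ‖x‖ ^ 2 - 2 * RCLike.re (@inner 𝕂 _ _ x a) + ‖a‖ ^ 2 :=
    @norm_sub_sq 𝕂 _ _ _ _ x a
  have hnn : 0 ≤ ‖a‖ ^ 2 - r ^ 2 := by nlinarith [norm_nonneg a, hr.le]
  have hs : Real.sqrt (‖a‖ ^ 2 - r ^ 2) ^ 2 = ‖a‖ ^ 2 - r ^ 2 := Real.sq_sqrt hnn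
  nlinarith [sq_nonneg (‖x‖ - Real.sqrt (‖a‖ ^ 2 - r ^ 2)), Real.sqrt_nonneg (‖a‖ ^ 2 - r ^ 2)]
end

section
/- Let H be an inner product space over 𝕂, and x, a ∈ H, r > 0 with ‖x − a‖ ≤ r < ‖a‖. Then ‖x‖²‖a‖² − (Re⟨x, a⟩)² ≤ r²‖x‖². Equality holds if and only if ‖x − a‖ = r and ‖x‖² + r² = ‖a‖². -/
theorem stmt_6 {𝕂 H : Type*} [RCLike 𝕂] [NormedAddCommGroup H] [InnerProductSpace 𝕂 H]
    (x a : H) (r : ℝ) (hr : 0 < r) (h1 : ‖x - a‖ ≤ r) (h2 : r < ‖a‖) :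
    ‖x‖ ^ 2 * ‖a‖ ^ 2 - (RCLike.re (@inner 𝕂 _ _ x a)) ^ 2 ≤ r ^ 2 * ‖x‖ ^ 2 ∧
      (‖x‖ ^ 2 * ‖a‖ ^ 2 - (RCLike.re (@inner 𝕂 _ _ x a)) ^ 2 = r ^ 2 * ‖x‖ ^ 2 ↔
        ‖x - a‖ = r ∧ ‖x‖ ^ 2 + r ^ 2 = ‖a‖ ^ 2) := by
  set t : ℝ := RCLike.re (@inner 𝕂 _ _ x a) with ht
  have hexp : ‖x - a‖ ^ 2 = ‖x‖ ^ 2 - 2 * t + ‖a‖ ^ 2 := by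
    rw [ht]
    exact @norm_sub_sq 𝕂 _ _ _ _ x a
  have hxa0 : (0:ℝ) ≤ ‖x - a‖ := norm_nonneg _
  have h1' : ‖x - a‖ ^ 2 ≤ r ^ 2 := by nlinarith
  have h2' : r ^ 2 < ‖a‖ ^ 2 := by nlinarith [norm_nonneg a]
  have hx0 : (0:ℝ) ≤ ‖x‖ ^ 2 := sq_nonneg _
  -- 2t ≥ u + v where u = ‖x‖², v = ‖a‖² - r²
  have ht2 : ‖x‖ ^ 2 + (‖a‖ ^ 2 - r ^ 2) ≤ 2 * t := by nlinarith
  have htpos : 0 < t := by nlinarith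
  constructor
  · nlinarith [sq_nonneg (‖x‖ ^ 2 - ‖a‖ ^ 2 + r ^ 2),
      sq_nonneg (2 * t - ‖x‖ ^ 2 - ‖a‖ ^ 2 + r ^ 2),
      mul_le_mul_of_nonneg_left ht2 (le_of_lt htpos)]
  · constructor
    · intro heq
      have hd : ‖x - a‖ ^ 2 = r ^ 2 := by
        nlinarith [sq_nonneg (‖x‖ ^ 2 - ‖a‖ ^ 2 + r ^ 2),
          mul_nonneg (sub_nonneg.mpr h1') hx0,
          mul_nonneg (sub_nonneg.mpr h1') (le_of_lt (sub_pos.mpr h2')),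
          mul_le_mul_of_nonneg_left ht2 (le_of_lt htpos)]
      have huv : ‖x‖ ^ 2 = ‖a‖ ^ 2 - r ^ 2 := by
        nlinarith [sq_nonneg (‖x‖ ^ 2 - ‖a‖ ^ 2 + r ^ 2)]
      refine ⟨?_, by linarith⟩
      nlinarith [hd, hxa0, hr, sq_nonneg (‖x - a‖ - r), sq_nonneg (‖x - a‖ + r)]
    · rintro ⟨he1, he2⟩
      have : ‖x - a‖ ^ 2 = r ^ 2 := by rw [he1]
      nlinarith
end

section
/- Let H be an inner product space over 𝕂, and x, y ∈ H, M ≥ m > 0. If Re⟨My − x, x − my⟩ ≥ 0, then ‖x‖‖y‖ ≤ (1/2) · ((M + m)/√(mM)) · Re⟨x, y⟩. -/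
theorem stmt_7 {𝕂 H : Type*} [RCLike 𝕂] [NormedAddCommGroup H] [InnerProductSpace 𝕂 H]
    (x y : H) (m M : ℝ) (hm : 0 < m) (hM : m ≤ M)
    (h : 0 ≤ RCLike.re (@inner 𝕂 _ _ ((M : 𝕂) • y - x) (x - (m : 𝕂) • y))) :
    ‖x‖ * ‖y‖ ≤ (1 / 2) * ((M + m) / Real.sqrt (m * M)) *
      RCLike.re (@inner 𝕂 _ _ x y) := by
  have hre : RCLike.re (@inner 𝕂 _ _ y x) = RCLike.re (@inner 𝕂 _ _ x y) := by
    rw [← inner_conj_symm x y, RCLike.conj_re]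
  have hM0 : 0 < M := hm.trans_le hM
  have hxx : RCLike.re (@inner 𝕂 _ _ x x) = ‖x‖ ^ 2 := inner_self_eq_norm_sq x
  have hyy : RCLike.re (@inner 𝕂 _ _ y y) = ‖y‖ ^ 2 := inner_self_eq_norm_sq y
  have hexp : RCLike.re (@inner 𝕂 _ _ ((M : 𝕂) • y - x) (x - (m : 𝕂) • y))
      = (M + m) * RCLike.re (@inner 𝕂 _ _ x y) - ‖x‖ ^ 2 - m * M * ‖y‖ ^ 2 := by
    simp only [inner_sub_left, inner_sub_right, inner_smul_left, inner_smul_right,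
      RCLike.conj_ofReal, map_add, map_sub, RCLike.mul_re, RCLike.ofReal_re,
      RCLike.ofReal_im]
    rw [hre, hxx, hyy]; ring
  rw [hexp] at h
  have ht : 0 < Real.sqrt (m * M) := Real.sqrt_pos.2 (by positivity)
  have ht2 : Real.sqrt (m * M) ^ 2 = m * M := Real.sq_sqrt (by positivity)
  have key : 2 * Real.sqrt (m * M) * (‖x‖ * ‖y‖) ≤ (M + m) * RCLike.re (@inner 𝕂 _ _ x y) := by
    nlinarith [sq_nonneg (‖x‖ - Real.sqrt (m * M) * ‖y‖)]
  rw [← sub_nonneg]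
  have : (1 / 2) * ((M + m) / Real.sqrt (m * M)) * RCLike.re (@inner 𝕂 _ _ x y) - ‖x‖ * ‖y‖
      = ((M + m) * RCLike.re (@inner 𝕂 _ _ x y) - 2 * Real.sqrt (m * M) * (‖x‖ * ‖y‖))
        / (2 * Real.sqrt (m * M)) := by
    field_simp
  rw [this]
  apply div_nonneg (by linarith) (by positivity)
end

section
/- Let H be an inner product space over 𝕂 and x, y ∈ H, M ≥ m > 0. If Re⟨My − x, x − my⟩ ≥ 0 then ‖x‖‖y‖ − Re⟨x, y⟩ ≤ (1/4) · ((M − m)²/(M + m)) · ‖y‖². -/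
theorem stmt_8 {𝕂 H : Type*} [RCLike 𝕂] [NormedAddCommGroup H] [InnerProductSpace 𝕂 H]
    (x y : H) (m M : ℝ) (hm : 0 < m) (hM : m ≤ M)
    (h : 0 ≤ RCLike.re (@inner 𝕂 _ _ ((M : 𝕂) • y - x) (x - (m : 𝕂) • y))) :
    ‖x‖ * ‖y‖ - RCLike.re (@inner 𝕂 _ _ x y) ≤
      (1 / 4) * ((M - m) ^ 2 / (M + m)) * ‖y‖ ^ 2 := by
  have hyy : RCLike.re (@inner 𝕂 _ _ y y) = ‖y‖ ^ 2 := by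
    rw [inner_self_eq_norm_sq]
  have hxx : RCLike.re (@inner 𝕂 _ _ x x) = ‖x‖ ^ 2 := by
    rw [inner_self_eq_norm_sq]
  have hsym : RCLike.re (@inner 𝕂 _ _ y x) = RCLike.re (@inner 𝕂 _ _ x y) := by
    rw [← inner_conj_symm y x, RCLike.conj_re]
  simp only [inner_sub_left, inner_sub_right, inner_smul_left, inner_smul_right,
    RCLike.conj_ofReal, map_sub, RCLike.re_ofReal_mul] at h
  rw [hyy, hxx, hsym] at h
  have hpos : (0:ℝ) < M + m := by linarith
  rw [show (1/4) * ((M-m)^2/(M+m)) * ‖y‖^2 = ((M-m)^2 * ‖y‖^2/4)/(M+m) by ring,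
    le_div_iff₀ hpos]
  nlinarith [h, sq_nonneg (‖x‖ - (M+m)/2 * ‖y‖), norm_nonneg y, norm_nonneg x]
end

section
/- Let H be an inner product space, eₖ, xᵢ ∈ H \ {0}, and Mᵢₖ ≥ 0 with ‖xᵢ‖ − Re⟨xᵢ, eₖ⟩ ≤ Mᵢₖ for all i ∈ {1,…,n}, k ∈ {1,…,m}. Then ∑ᵢ ‖xᵢ‖ ≤ ‖(1/m) ∑ₖ eₖ‖ · ‖∑ᵢ xᵢ‖ + (1/m) ∑ₖ ∑ᵢ Mᵢₖ. -/
theorem stmt_13 {𝕂 H : Type*} [RCLike 𝕂] [NormedAddCommGroup H] [InnerProductSpace 𝕂 H]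
    {m n : ℕ} (hm : 0 < m) (e : Fin m → H) (he : ∀ k, e k ≠ 0)
    (x : Fin n → H) (hx : ∀ i, x i ≠ 0)
    (M : Fin n → Fin m → ℝ) (hM : ∀ i k, 0 ≤ M i k)
    (h : ∀ i k, ‖x i‖ - RCLike.re (@inner 𝕂 _ _ (x i) (e k)) ≤ M i k) :
    ∑ i, ‖x i‖ ≤ ‖((m : 𝕂))⁻¹ • ∑ k, e k‖ * ‖∑ i, x i‖ +
      (1 / (m : ℝ)) * ∑ k, ∑ i, M i k := by
  set E : H := ((m : 𝕂))⁻¹ • ∑ k, e k with hE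
  have hmR : (0:ℝ) < (m:ℝ) := by exact_mod_cast hm
  have key : ∀ i, ‖x i‖ ≤ RCLike.re (@inner 𝕂 _ _ (x i) E) + (1/(m:ℝ)) * ∑ k, M i k := by
    intro i
    have h1 : (m:ℝ) * ‖x i‖ ≤ ∑ k, RCLike.re (@inner 𝕂 _ _ (x i) (e k)) + ∑ k, M i k := by
      have := Finset.sum_le_sum (s := Finset.univ) (fun k _ => h i k)
      simp only [Finset.sum_sub_distrib, Finset.sum_const, Finset.card_univ,
        Fintype.card_fin, nsmul_eq_mul] at this
      linarith
    have h2 : RCLike.re (@inner 𝕂 _ _ (x i) E)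
        = (m:ℝ)⁻¹ * ∑ k, RCLike.re (@inner 𝕂 _ _ (x i) (e k)) := by
      rw [hE, inner_smul_right,
        show ((m:𝕂))⁻¹ = (((m:ℝ)⁻¹ : ℝ) : 𝕂) by push_cast; ring,
        RCLike.re_ofReal_mul, inner_sum, map_sum]
    calc ‖x i‖ = (m:ℝ)⁻¹ * ((m:ℝ) * ‖x i‖) := by field_simp
      _ ≤ (m:ℝ)⁻¹ * (∑ k, RCLike.re (@inner 𝕂 _ _ (x i) (e k)) + ∑ k, M i k) :=
          mul_le_mul_of_nonneg_left h1 (inv_nonneg.mpr hmR.le)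
      _ = RCLike.re (@inner 𝕂 _ _ (x i) E) + (1/(m:ℝ)) * ∑ k, M i k := by
          rw [h2]; ring
  calc ∑ i, ‖x i‖ ≤ ∑ i, (RCLike.re (@inner 𝕂 _ _ (x i) E) + (1/(m:ℝ)) * ∑ k, M i k) :=
        Finset.sum_le_sum (fun i _ => key i)
    _ = RCLike.re (@inner 𝕂 _ _ (∑ i, x i) E) + (1/(m:ℝ)) * ∑ i, ∑ k, M i k := by
        rw [Finset.sum_add_distrib, sum_inner, map_sum, Finset.mul_sum]
    _ ≤ ‖E‖ * ‖∑ i, x i‖ + (1/(m:ℝ)) * ∑ k, ∑ i, M i k := by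
        rw [Finset.sum_comm]
        gcongr
        calc RCLike.re (@inner 𝕂 _ _ (∑ i, x i) E) ≤ ‖(@inner 𝕂 _ _ (∑ i, x i) E)‖ :=
              RCLike.re_le_norm _
          _ ≤ ‖∑ i, x i‖ * ‖E‖ := norm_inner_le_norm _ _
          _ = ‖E‖ * ‖∑ i, x i‖ := mul_comm _ _
end

section
/- Let a₁,…,aₘ ∈ ℂ and x₁,…,xₙ ∈ ℂ. If rₖ ≥ 0 with ∑ₖ rₖ > 0 and rₖ(|Re xⱼ| + |Im xⱼ|) ≤ Re aₖ · Re xⱼ − Im aₖ · Im xⱼ for all j, k, then ∑ⱼ (|Re xⱼ| + |Im xⱼ|) ≤ (|∑ₖ aₖ| / ∑ₖ rₖ) · (|∑ⱼ Re xⱼ| + |∑ⱼ Im xⱼ|). -/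
/-! The right-hand side of each hypothesis is `Re (aₖ xⱼ)`; summing over `j` and `k` gives
`(∑ r) · ∑ (|Re xⱼ| + |Im xⱼ|) ≤ Re ((∑ a)(∑ x)) ≤ ‖∑ a‖ · (|Re ∑ x| + |Im ∑ x|)`. -/

open Finset

theorem Complex.re_mul_le_norm_mul_abs_re_add_abs_im (z w : ℂ) :
    (z * w).re ≤ ‖z‖ * (|w.re| + |w.im|) :=
  calc (z * w).re ≤ ‖z * w‖ := Complex.re_le_norm _
    _ = ‖z‖ * ‖w‖ := norm_mul z w
    _ ≤ ‖z‖ * (|w.re| + |w.im|) :=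
      mul_le_mul_of_nonneg_left (Complex.norm_le_abs_re_add_abs_im w) (norm_nonneg z)

theorem Complex.sum_mul_sum_le_re_sum_mul_sum {ι κ : Type*} (s : Finset ι) (t : Finset κ)
    (r : ι → ℝ) (c : κ → ℝ) (a : ι → ℂ) (x : κ → ℂ)
    (h : ∀ k ∈ s, ∀ j ∈ t, r k * c j ≤ (a k * x j).re) :
    (∑ k ∈ s, r k) * (∑ j ∈ t, c j) ≤ ((∑ k ∈ s, a k) * ∑ j ∈ t, x j).re := by
  rw [sum_mul_sum, sum_mul_sum, Complex.re_sum]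
  refine sum_le_sum fun k hk => ?_
  rw [Complex.re_sum]
  exact sum_le_sum fun j hj => h k hk j hj

theorem stmt_16_general {m n : ℕ} (a : Fin m → ℂ) (x : Fin n → ℂ)
    (r : Fin m → ℝ) (hrs : 0 < ∑ k, r k)
    (h : ∀ j k, r k * (|(x j).re| + |(x j).im|) ≤
      (a k).re * (x j).re - (a k).im * (x j).im) :
    ∑ j, (|(x j).re| + |(x j).im|) ≤
      (‖∑ k, a k‖ / ∑ k, r k) *
        (|∑ j, (x j).re| + |∑ j, (x j).im|) := by
  have hsum : (∑ k, r k) * ∑ j, (|(x j).re| + |(x j).im|) ≤ ((∑ k, a k) * ∑ j, x j).re :=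
    Complex.sum_mul_sum_le_re_sum_mul_sum _ _ _ _ _ _ fun k _ j _ => by
      simpa only [Complex.mul_re] using h j k
  have hnorm := Complex.re_mul_le_norm_mul_abs_re_add_abs_im (∑ k, a k) (∑ j, x j)
  rw [Complex.re_sum, Complex.im_sum] at hnorm
  rw [div_mul_eq_mul_div, le_div_iff₀ hrs, mul_comm]
  exact hsum.trans hnorm

theorem stmt_16 {m n : ℕ} (a : Fin m → ℂ) (x : Fin n → ℂ)
    (r : Fin m → ℝ) (hr : ∀ k, 0 ≤ r k) (hrs : 0 < ∑ k, r k)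
    (h : ∀ j k, r k * (|(x j).re| + |(x j).im|) ≤
      (a k).re * (x j).re - (a k).im * (x j).im) :
    ∑ j, (|(x j).re| + |(x j).im|) ≤
      (‖∑ k, a k‖ / ∑ k, r k) *
        (|∑ j, (x j).re| + |∑ j, (x j).im|) :=
  stmt_16_general a x r hrs h
end

section
/- Let H be a Hilbert space over 𝕂, e ∈ H with ‖e‖ = 1, K ≥ 1, and f : [a,b] → H Bochner integrable with ‖f(t)‖ ≤ K · Re⟨f(t), e⟩ for a.e. t ∈ [a,b]. Then ∫ₐᵇ ‖f(t)‖ dt ≤ K · ‖∫ₐᵇ f(t) dt‖. -/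
open MeasureTheory

theorem stmt_18 {𝕂 H : Type*} [RCLike 𝕂] [NormedAddCommGroup H] [InnerProductSpace 𝕂 H]
    [NormedSpace ℝ H] [IsScalarTower ℝ 𝕂 H] [CompleteSpace H] (a b : ℝ) (hab : a ≤ b) (e : H) (he : ‖e‖ = 1)
    (K : ℝ) (hK : 1 ≤ K) (f : ℝ → H)
    (hf : IntegrableOn f (Set.Icc a b))
    (h : ∀ᵐ t ∂(volume.restrict (Set.Icc a b)),
      ‖f t‖ ≤ K * RCLike.re (@inner 𝕂 _ _ (f t) e)) :
    ∫ t in Set.Icc a b, ‖f t‖ ≤ K * ‖∫ t in Set.Icc a b, f t‖ := by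
  have hK0 : 0 ≤ K := le_trans zero_le_one hK
  have hsymm : ∀ t, RCLike.re (@inner 𝕂 _ _ (f t) e) = RCLike.re (@inner 𝕂 _ _ e (f t)) := by
    intro t
    rw [← inner_conj_symm (𝕜 := 𝕂) e (f t), RCLike.conj_re]
  have hint : Integrable (fun t => @inner 𝕂 _ _ e (f t)) (volume.restrict (Set.Icc a b)) :=
    (innerSL 𝕂 e).integrable_comp hf
  have hint2 : Integrable (fun t => K * RCLike.re (@inner 𝕂 _ _ (f t) e))
      (volume.restrict (Set.Icc a b)) := by
    simp_rw [hsymm]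
    exact (hint.re.const_mul K)
  have h1 : ∫ t in Set.Icc a b, ‖f t‖
      ≤ ∫ t in Set.Icc a b, K * RCLike.re (@inner 𝕂 _ _ (f t) e) :=
    integral_mono_ae hf.norm hint2 h
  have h2 : ∫ t in Set.Icc a b, K * RCLike.re (@inner 𝕂 _ _ (f t) e)
      = K * RCLike.re (@inner 𝕂 _ _ e (∫ t in Set.Icc a b, f t)) := by
    simp_rw [hsymm]
    rw [integral_const_mul]
    congr 1
    rw [← integral_inner hf]
    exact (RCLike.reCLM.integral_comp_comm hint)
  have h3 : RCLike.re (@inner 𝕂 _ _ e (∫ t in Set.Icc a b, f t))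
      ≤ ‖∫ t in Set.Icc a b, f t‖ := by
    calc RCLike.re (@inner 𝕂 _ _ e (∫ t in Set.Icc a b, f t))
        ≤ ‖e‖ * ‖∫ t in Set.Icc a b, f t‖ := re_inner_le_norm e _
      _ = ‖∫ t in Set.Icc a b, f t‖ := by rw [he, one_mul]
  calc ∫ t in Set.Icc a b, ‖f t‖
      ≤ K * RCLike.re (@inner 𝕂 _ _ e (∫ t in Set.Icc a b, f t)) := h1.trans_eq h2
    _ ≤ K * ‖∫ t in Set.Icc a b, f t‖ := by
        exact mul_le_mul_of_nonneg_left h3 hK0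
end

section
/- Let H be a Hilbert space, ρ ∈ [0,1), e ∈ H with ‖e‖ = 1, and f : [a,b] → H Bochner integrable with ‖f(t) − e‖ ≤ ρ for a.e. t ∈ [a,b]. Then √(1 − ρ²) · ∫ₐᵇ ‖f(t)‖ dt ≤ ‖∫ₐᵇ f(t) dt‖. -/
open MeasureTheory

theorem stmt_19 {𝕂 H : Type*} [RCLike 𝕂] [NormedAddCommGroup H] [InnerProductSpace 𝕂 H]
    [NormedSpace ℝ H] [IsScalarTower ℝ 𝕂 H] [CompleteSpace H] (a b : ℝ) (hab : a ≤ b) (e : H) (he : ‖e‖ = 1)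
    (ρ : ℝ) (hρ0 : 0 ≤ ρ) (hρ1 : ρ < 1) (f : ℝ → H)
    (hf : IntegrableOn f (Set.Icc a b))
    (h : ∀ᵐ t ∂(volume.restrict (Set.Icc a b)), ‖f t - e‖ ≤ ρ) :
    Real.sqrt (1 - ρ ^ 2) * ∫ t in Set.Icc a b, ‖f t‖ ≤
      ‖∫ t in Set.Icc a b, f t‖ := by
  set c := Real.sqrt (1 - ρ ^ 2) with hc
  have hc2 : c ^ 2 = 1 - ρ ^ 2 := by
    rw [hc, Real.sq_sqrt]; nlinarith
  have hcpos : 0 ≤ c := Real.sqrt_nonneg _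
  -- pointwise bound
  have key : ∀ᵐ t ∂(volume.restrict (Set.Icc a b)),
      c * ‖f t‖ ≤ RCLike.re (inner (𝕜 := 𝕂) e (f t)) := by
    filter_upwards [h] with t ht
    have hexp := norm_sub_sq (𝕜 := 𝕂) (f t) e
    have h2 : ‖f t - e‖ ^ 2 ≤ ρ ^ 2 := by
      apply sq_le_sq' _ ht
      nlinarith [norm_nonneg (f t - e)]
    rw [hexp, he] at h2
    have hs : RCLike.re (inner (𝕜 := 𝕂) e (f t)) = RCLike.re (inner (𝕜 := 𝕂) (f t) e) :=
      inner_re_symm _ _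
    nlinarith [sq_nonneg (‖f t‖ - c)]
  -- integrabilities
  have hfn : IntegrableOn (fun t => ‖f t‖) (Set.Icc a b) := hf.norm
  have hinner : Integrable (fun t => RCLike.re (inner (𝕜 := 𝕂) e (f t)))
      (volume.restrict (Set.Icc a b)) := (hf.const_inner e).re
  calc c * ∫ t in Set.Icc a b, ‖f t‖
      = ∫ t in Set.Icc a b, c * ‖f t‖ := (integral_const_mul _ _).symm
    _ ≤ ∫ t in Set.Icc a b, RCLike.re (inner (𝕜 := 𝕂) e (f t)) := by
        exact integral_mono_ae (hfn.const_mul c) hinner key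
    _ = RCLike.re (inner (𝕜 := 𝕂) e (∫ t in Set.Icc a b, f t)) := by
        rw [← integral_inner hf, ← integral_re (hf.const_inner e)]
    _ ≤ ‖inner (𝕜 := 𝕂) e (∫ t in Set.Icc a b, f t)‖ := RCLike.re_le_norm _
    _ ≤ ‖e‖ * ‖∫ t in Set.Icc a b, f t‖ := norm_inner_le_norm _ _
    _ = ‖∫ t in Set.Icc a b, f t‖ := by rw [he, one_mul]
end
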